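/- Assume n ≥ 1, m ≥ 1, and the Tanner graph of H is connected (the bipartite graph on vertex set {u_1,…,u_n} ∪ {v_1,…,v_m} with an edge between u_i and v_j iff H_{j,i} ≠ 0 is connected). Let (h, z) be an LP pseudocodeword with h ≠ 0, and let M = ∑_{α∈R} h_1(α) (independent of the coordinate index by connectedness); then M > 0. Define f_i^{(α)} = h_i(α)/M for all i ∈ {1,…,n} and α ∈ R⁻, and w_{j,S} = z_{j,S}/M for all j ∈ J and S ∈ E_j. Then (f, w) is a point of the polytope Q. -/

import Mathlib

open Finset

/-- The tuple of sets `X_j(c)`: for each symbol `α`, the set of positions `i` in the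
support of the `j`-th row of `H` where `c i = α`. -/
def Xj {R : Type} [Ring R] [DecidableEq R] {n m : ℕ} (H : Fin m → Fin n → R) (j : Fin m)
    (c : Fin n → R) : R → Finset (Fin n) :=
  fun α => univ.filter (fun i => H j i ≠ 0 ∧ c i = α)

/-- The set `E_j` of all tuples `X_j(c)` arising from words `c` satisfying parity check `j`. -/
def Ej {R : Type} [Ring R] [Fintype R] [DecidableEq R] {n m : ℕ} (H : Fin m → Fin n → R)
    (j : Fin m) : Finset (R → Finset (Fin n)) :=
  (univ.filter (fun c : Fin n → R => ∑ i, H j i * c i = 0)).image (Xj H j)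

/-- Membership in the relaxed LP polytope `Q`. -/
def MemQ {R : Type} [Ring R] [Fintype R] [DecidableEq R] {n m : ℕ} (H : Fin m → Fin n → R)
    (f : Fin n → R → ℝ) (w : Fin m → (R → Finset (Fin n)) → ℝ) : Prop :=
  (∀ j : Fin m, ∀ S ∈ Ej H j, 0 ≤ w j S ∧ w j S ≤ 1) ∧
  (∀ j : Fin m, ∑ S ∈ Ej H j, w j S = 1) ∧
  (∀ j : Fin m, ∀ i : Fin n, H j i ≠ 0 → ∀ α : R, α ≠ 0 →
    f i α = ∑ S ∈ (Ej H j).filter (fun S => i ∈ S α), w j S)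

/-- LP pseudocodeword: nonnegative integer vectors `(h, z)` satisfying the defining equations. -/
def IsLPPseudocodeword {R : Type} [Ring R] [Fintype R] [DecidableEq R] {n m : ℕ}
    (H : Fin m → Fin n → R) (h : Fin n → R → ℤ)
    (z : Fin m → (R → Finset (Fin n)) → ℤ) : Prop :=
  (∀ i α, 0 ≤ h i α) ∧
  (∀ j : Fin m, ∀ S ∈ Ej H j, 0 ≤ z j S) ∧
  (∀ j : Fin m, ∀ i : Fin n, H j i ≠ 0 →
    (∀ α : R, α ≠ 0 → h i α = ∑ S ∈ (Ej H j).filter (fun S => i ∈ S α), z j S) ∧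
    h i 0 = ∑ S ∈ (Ej H j).filter (fun S => ∀ α : R, α ≠ 0 → i ∉ S α), z j S)

/-- The embedding of a word `c ∈ Rⁿ` as the point `(ξ(c₁) | … | ξ(c_n))`
(indicator coordinates for the nonzero symbols). -/
def xiEmb {R : Type} [Zero R] [DecidableEq R] {n : ℕ} (c : Fin n → R) : Fin n → R → ℝ :=
  fun i α => if α ≠ 0 ∧ c i = α then 1 else 0

/-- The linear cost function `λ · fᵀ = ∑_i ∑_{α ∈ R⁻} λ_i^{(α)} f_i^{(α)}`. -/
def costQ {R : Type} [Zero R] [Fintype R] [DecidableEq R] {n : ℕ}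
    (lam f : Fin n → R → ℝ) : ℝ :=
  ∑ i, ∑ α ∈ univ.filter (fun α : R => α ≠ 0), lam i α * f i α

/-- Connectedness of the Tanner graph of `H`: the bipartite graph on
`{u_1,…,u_n} ∪ {v_1,…,v_m}` with `u_i ~ v_j` iff `H j i ≠ 0`. -/
def TannerConnected {R : Type} [Zero R] {n m : ℕ} (H : Fin m → Fin n → R) : Prop :=
  (SimpleGraph.fromRel (fun x y : Fin n ⊕ Fin m =>
      ∃ i j, x = Sum.inl i ∧ y = Sum.inr j ∧ H j i ≠ 0)).Connected

/-- Graph-cover pseudocodeword for the `M`-cover specified by permutations `σ`. -/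
def IsGCPseudocodeword {R : Type} [Ring R] [DecidableEq R] {n m : ℕ}
    (H : Fin m → Fin n → R) (M : ℕ) (σ : Fin m → Fin n → Equiv.Perm (Fin M))
    (p : Fin n → Fin M → R) : Prop :=
  ∀ (j : Fin m) (ℓ : Fin M),
    ∑ i ∈ univ.filter (fun i => H j i ≠ 0), H j i * p i (σ j i ℓ) = 0

/-!
Every nonzero column of `H` meets each `S ∈ E_j` in exactly one symbol class `S_α`, so the
pseudocodeword equations at an edge `(i, j)` of the Tanner graph sum up to
`∑_α h_i(α) = ∑_S z_{j,S}`. By connectedness this total mass is the same number `M` at every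
vertex; `h ≠ 0` forces `M > 0`, and dividing by `M` turns the equations into those of `Q`.
-/

theorem SimpleGraph.Reachable.eq_of_forall_adj {V α : Type*} {G : SimpleGraph V} {f : V → α}
    (hf : ∀ x y, G.Adj x y → f x = f y) {x y : V} (hxy : G.Reachable x y) : f x = f y := by
  obtain ⟨w⟩ := hxy
  induction w with
  | nil => rfl
  | cons hadj _ ih => exact (hf _ _ hadj).trans ih

section Ej

variable {R : Type} [Ring R] [DecidableEq R] {n m : ℕ} {H : Fin m → Fin n → R}
  {j : Fin m} {i : Fin n}

theorem mem_Xj_iff (hij : H j i ≠ 0) {c : Fin n → R} {α : R} :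
    i ∈ Xj H j c α ↔ c i = α := by
  simp [Xj, hij]

variable [Fintype R]

theorem sum_ite_mem_of_mem_Ej {A : Type*} [AddCommMonoid A] (hij : H j i ≠ 0)
    {S : R → Finset (Fin n)} (hS : S ∈ Ej H j) (x : A) :
    ∑ α : R, (if i ∈ S α then x else 0) = x := by
  obtain ⟨c, -, rfl⟩ := mem_image.mp hS
  simp [mem_Xj_iff hij]

theorem filter_Ej_forall_not_mem (hij : H j i ≠ 0) :
    (Ej H j).filter (fun S => ∀ α : R, α ≠ 0 → i ∉ S α) = (Ej H j).filter (fun S => i ∈ S 0) := by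
  refine filter_congr fun S hS => ?_
  obtain ⟨c, -, rfl⟩ := mem_image.mp hS
  simp only [mem_Xj_iff hij]
  exact ⟨fun h => not_not.mp fun hc => h (c i) hc rfl, fun h α hα hc => hα (hc ▸ h)⟩

end Ej

namespace IsLPPseudocodeword

variable {R : Type} [Ring R] [Fintype R] [DecidableEq R] {n m : ℕ} {H : Fin m → Fin n → R}
  {h : Fin n → R → ℤ} {z : Fin m → (R → Finset (Fin n)) → ℤ}

theorem eq_sum_filter_mem (hpc : IsLPPseudocodeword H h z) {j : Fin m} {i : Fin n}
    (hij : H j i ≠ 0) (α : R) :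
    h i α = ∑ S ∈ (Ej H j).filter (fun S => i ∈ S α), z j S := by
  obtain ⟨hne, hzero⟩ := hpc.2.2 j i hij
  by_cases hα : α = 0
  · rw [hα, hzero, filter_Ej_forall_not_mem hij]
  · exact hne α hα

theorem sum_Ej_eq_sum (hpc : IsLPPseudocodeword H h z) {j : Fin m} {i : Fin n}
    (hij : H j i ≠ 0) : ∑ S ∈ Ej H j, z j S = ∑ α : R, h i α :=
  calc ∑ S ∈ Ej H j, z j S
      = ∑ S ∈ Ej H j, ∑ α : R, (if i ∈ S α then z j S else 0) :=
        (sum_congr rfl fun _ hS => sum_ite_mem_of_mem_Ej hij hS _).symm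
    _ = ∑ α : R, ∑ S ∈ (Ej H j).filter (fun S => i ∈ S α), z j S := by
        rw [sum_comm]
        simp only [sum_filter]
    _ = ∑ α : R, h i α := sum_congr rfl fun α _ => (hpc.eq_sum_filter_mem hij α).symm

/-- The total mass of `(h, z)` at a vertex of the Tanner graph: `inl i` is the variable node
`u_i`, `inr j` the check node `v_j`. -/
def mass (H : Fin m → Fin n → R) (h : Fin n → R → ℤ) (z : Fin m → (R → Finset (Fin n)) → ℤ) :
    Fin n ⊕ Fin m → ℤ :=
  Sum.elim (fun i => ∑ α : R, h i α) (fun j => ∑ S ∈ Ej H j, z j S)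

theorem mass_eq_of_tannerConnected (hpc : IsLPPseudocodeword H h z) (hconn : TannerConnected H)
    (x y : Fin n ⊕ Fin m) : mass H h z x = mass H h z y := by
  refine (hconn.preconnected x y).eq_of_forall_adj fun x y hxy => ?_
  rcases (SimpleGraph.fromRel_adj _ _ _).mp hxy |>.2 with
    ⟨i, j, rfl, rfl, hij⟩ | ⟨i, j, rfl, rfl, hij⟩
  · exact (hpc.sum_Ej_eq_sum hij).symm
  · exact hpc.sum_Ej_eq_sum hij

theorem memQ_div (hpc : IsLPPseudocodeword H h z) {M : ℤ} (hM : 0 < M)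
    (hmass : ∀ j, ∑ S ∈ Ej H j, z j S = M) :
    MemQ H (fun i α => (h i α : ℝ) / (M : ℝ)) (fun j S => (z j S : ℝ) / (M : ℝ)) := by
  have hMR : (0 : ℝ) < M := by exact_mod_cast hM
  refine ⟨fun j S hS => ⟨?_, ?_⟩, fun j => ?_, fun j i hij α _ => ?_⟩
  · exact div_nonneg (by exact_mod_cast hpc.2.1 j S hS) hMR.le
  · rw [div_le_one hMR]
    exact_mod_cast (single_le_sum (fun T hT => hpc.2.1 j T hT) hS).trans (hmass j).le
  · rw [← sum_div, div_eq_one_iff_eq hMR.ne']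
    exact_mod_cast hmass j
  · simp only [hpc.eq_sum_filter_mem hij α, Int.cast_sum, sum_div]

end IsLPPseudocodeword

theorem stmt12_general {R : Type} [Ring R] [Fintype R] [DecidableEq R] {n m : ℕ}
    (hn : 0 < n)
    (H : Fin m → Fin n → R) (hconn : TannerConnected H)
    (h : Fin n → R → ℤ) (z : Fin m → (R → Finset (Fin n)) → ℤ)
    (hpc : IsLPPseudocodeword H h z)
    (hne : ∃ (i : Fin n) (α : R), h i α ≠ 0)
    (M : ℤ) (hM : M = ∑ α : R, h ⟨0, hn⟩ α) :
    0 < M ∧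
    MemQ H (fun i α => (h i α : ℝ) / (M : ℝ)) (fun j S => (z j S : ℝ) / (M : ℝ)) := by
  have hmass : ∀ x, IsLPPseudocodeword.mass H h z x = M := fun x =>
    hM ▸ hpc.mass_eq_of_tannerConnected hconn x (Sum.inl ⟨0, hn⟩)
  obtain ⟨i, α, hiα⟩ := hne
  have hMpos : 0 < M := by
    rw [← hmass (Sum.inl i)]
    exact sum_pos' (fun β _ => hpc.1 i β) ⟨α, mem_univ α, (hpc.1 i α).lt_of_ne' hiα⟩
  exact ⟨hMpos, hpc.memQ_div hMpos fun j => hmass (Sum.inr j)⟩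

/-- for a nonzero LP pseudocodeword `(h, z)` (Tanner graph connected)
with `M = ∑_{α∈R} h_1(α)`, one has `M > 0` and `(h/M, z/M)` is a point of `Q`. -/
theorem stmt12 {R : Type} [Ring R] [Fintype R] [DecidableEq R] {n m : ℕ}
    (hn : 0 < n) (hm : 0 < m)
    (H : Fin m → Fin n → R) (hconn : TannerConnected H)
    (h : Fin n → R → ℤ) (z : Fin m → (R → Finset (Fin n)) → ℤ)
    (hpc : IsLPPseudocodeword H h z)
    (hne : ∃ (i : Fin n) (α : R), h i α ≠ 0)
    (M : ℤ) (hM : M = ∑ α : R, h ⟨0, hn⟩ α) :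
    0 < M ∧
    MemQ H (fun i α => (h i α : ℝ) / (M : ℝ)) (fun j S => (z j S : ℝ) / (M : ℝ)) :=
  stmt12_general hn H hconn h z hpc hne M hM
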